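/- arXiv:1406.5671 — 3 statements merged into one kernel-verified Lean document; each statement's English description precedes it below -/
import Mathlib

section
/- Suppose τ ≤ η in the uncrossing partial order on P_n and i ∈ A(τ). Then i ∉ C(η); that is, η(i) ≠ i+1. -/
open scoped Classical

/-- `x` lies strictly inside the arc going (cyclically) from `a` to `b`. -/
def InArc (m : ℕ) (a b x : ZMod m) : Prop :=
  0 < (x - a).val ∧ (x - a).val < (b - a).val

/-- The chords `{a,b}` and `{c,d}` on the circle `ℤ/mℤ` cross: all four endpoints are
distinct and the endpoints alternate in cyclic order. -/
def Crosses (m : ℕ) (a b c d : ZMod m) : Prop :=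
  a ≠ b ∧ c ≠ d ∧ c ≠ a ∧ c ≠ b ∧ d ≠ a ∧ d ≠ b ∧
    (InArc m a b c ↔ InArc m b a d)

/-- A matching of the `2n` points `ℤ/2nℤ`: a fixed-point-free involution. -/
def IsMatching (n : ℕ) (τ : ZMod (2 * n) → ZMod (2 * n)) : Prop :=
  (∀ i, τ (τ i) = i) ∧ ∀ i, τ i ≠ i

/-- The number of crossings `c(τ)`: each unordered crossing pair of chords of `τ`
is counted `8` times by ordered pairs of representatives. -/
noncomputable def crossNum (n : ℕ) (τ : ZMod (2 * n) → ZMod (2 * n)) : ℕ :=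
  {p : ZMod (2 * n) × ZMod (2 * n) |
    Crosses (2 * n) p.1 (τ p.1) p.2 (τ p.2)}.ncard / 8

/-- Replace the pairs `{a, τ a}` and `{b, τ b}` of `τ` by `{a, b}` and `{τ a, τ b}`. -/
def swapPair (n : ℕ) (τ : ZMod (2 * n) → ZMod (2 * n)) (a b : ZMod (2 * n)) :
    ZMod (2 * n) → ZMod (2 * n) :=
  fun x => if x = a then b else if x = b then a
    else if x = τ a then τ b else if x = τ b then τ a else τ x

/-- `τ'` is obtained from `τ` by a single uncrossing move: two crossing pairs
`{a, τ a}`, `{b, τ b}` are replaced by `{a,b}, {τ a, τ b}` or by `{a, τ b}, {τ a, b}`. -/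
def UncrossingMove (n : ℕ) (τ τ' : ZMod (2 * n) → ZMod (2 * n)) : Prop :=
  ∃ a b, Crosses (2 * n) a (τ a) b (τ b) ∧
    (τ' = swapPair n τ a b ∨ τ' = swapPair n τ a (τ b))

/-- The uncrossing partial order on matchings: the reflexive-transitive closure of the
relation `τ' < τ` whenever `τ'` is obtained from `τ` by an uncrossing move and
`c(τ') = c(τ) - 1`. -/
def UncrossLE (n : ℕ) (τ σ : ZMod (2 * n) → ZMod (2 * n)) : Prop :=
  Relation.ReflTransGen (fun x y => IsMatching n x ∧ IsMatching n y ∧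
    UncrossingMove n y x ∧ crossNum n y = crossNum n x + 1) τ σ

/-- `s_i · τ := s_i ∘ τ ∘ s_i` where `s_i` is the transposition of `i` and `i+1`. -/
def sMove (n : ℕ) (i : ZMod (2 * n)) (τ : ZMod (2 * n) → ZMod (2 * n)) :
    ZMod (2 * n) → ZMod (2 * n) :=
  fun x => Equiv.swap i (i + 1) (τ (Equiv.swap i (i + 1) x))

/-- `i ∈ A(τ)`: `τ i ≠ i+1` and the chords `{i, τ i}` and `{i+1, τ (i+1)}` do not cross. -/
def inA (n : ℕ) (τ : ZMod (2 * n) → ZMod (2 * n)) (i : ZMod (2 * n)) : Prop :=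
  τ i ≠ i + 1 ∧ ¬ Crosses (2 * n) i (τ i) (i + 1) (τ (i + 1))

/-- `i ∈ B(τ)`: `τ i ≠ i+1` and the chords `{i, τ i}` and `{i+1, τ (i+1)}` cross. -/
def inB (n : ℕ) (τ : ZMod (2 * n) → ZMod (2 * n)) (i : ZMod (2 * n)) : Prop :=
  τ i ≠ i + 1 ∧ Crosses (2 * n) i (τ i) (i + 1) (τ (i + 1))

/-- `i ∈ C(τ)`: `i` is matched with `i+1`. -/
def inC (n : ℕ) (τ : ZMod (2 * n) → ZMod (2 * n)) (i : ZMod (2 * n)) : Prop :=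
  τ i = i + 1

/-- Elements of `P̂_n`, modelled inside `Option`: `none` is the adjoined bottom `0̂`,
and `some τ` belongs to `P̂_n` when `τ` is a matching. -/
def inPhat (n : ℕ) (x : Option (ZMod (2 * n) → ZMod (2 * n))) : Prop :=
  ∀ τ ∈ x, IsMatching n τ

/-- The order on `P̂_n`: `0̂` is below everything, and matchings are compared by the
uncrossing order. -/
def hatLE (n : ℕ) (x y : Option (ZMod (2 * n) → ZMod (2 * n))) : Prop :=
  x = none ∨ ∃ τ σ, x = some τ ∧ y = some σ ∧ UncrossLE n τ σ

/-- The rank function of `P̂_n`: `c(0̂) = -1` and `c(some τ) = crossNum τ`. -/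
noncomputable def hatRank (n : ℕ) (x : Option (ZMod (2 * n) → ZMod (2 * n))) : ℤ :=
  x.elim (-1) fun τ => (crossNum n τ : ℤ)

section AuxLemmas

variable {m : ℕ}

lemma aux_val_pos [NeZero m] {a b : ZMod m} (h : a ≠ b) : 0 < (a - b).val := by
  rw [ZMod.val_pos]; exact sub_ne_zero.mpr h

lemma aux_val_ne [NeZero m] {a b c : ZMod m} (h : a ≠ b) : (a - c).val ≠ (b - c).val := by
  intro hv
  exact h (by have := ZMod.val_injective m hv; exact sub_left_injective this)

lemma aux_inArc_compl [NeZero m] {a b x : ZMod m} (hab : a ≠ b) (hxa : x ≠ a) (hxb : x ≠ b) :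
    InArc m a b x ↔ ¬ InArc m b a x := by
  have hm : 0 < m := Nat.pos_of_ne_zero (NeZero.ne m)
  have hu0 : 0 < (x - a).val := aux_val_pos hxa
  have hv0 : 0 < (b - a).val := aux_val_pos (Ne.symm hab)
  have hum : (x - a).val < m := ZMod.val_lt _
  have hvm : (b - a).val < m := ZMod.val_lt _
  have huv : (x - a).val ≠ (b - a).val := aux_val_ne hxb
  have hnegv : (a - b).val = m - (b - a).val := by
    have h1 : a - b = -(b - a) := by ring
    rw [h1, ZMod.neg_val, if_neg (sub_ne_zero.mpr (Ne.symm hab))]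
  have hxbv : (x - b).val = ((x - a).val + (m - (b - a).val)) % m := by
    have h1 : x - b = (x - a) + -(b - a) := by ring
    rw [h1, ZMod.val_add, ZMod.neg_val, if_neg (sub_ne_zero.mpr (Ne.symm hab))]
  unfold InArc
  rcases Nat.lt_or_ge (x - a).val (b - a).val with h | h
  · have hmod : ((x - a).val + (m - (b - a).val)) % m = (x - a).val + (m - (b - a).val) :=
      Nat.mod_eq_of_lt (by omega)
    rw [hxbv, hnegv, hmod]; omega
  · have heq : (x - a).val + (m - (b - a).val) = m + ((x - a).val - (b - a).val) := by omega
    have hmod : ((x - a).val + (m - (b - a).val)) % m = (x - a).val - (b - a).val := by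
      rw [heq, Nat.add_mod_left, Nat.mod_eq_of_lt (by omega)]
    rw [hxbv, hnegv, hmod]; omega

lemma aux_inArc_step [NeZero m] (hm1 : 1 < m) {a b x : ZMod m}
    (hxa : x ≠ a) (hxb : x ≠ b) (hxa' : x + 1 ≠ a) (hxb' : x + 1 ≠ b) :
    InArc m a b x ↔ InArc m a b (x + 1) := by
  haveI : Fact (1 < m) := ⟨hm1⟩
  have hu0 : 0 < (x - a).val := aux_val_pos hxa
  have hu0' : 0 < (x + 1 - a).val := aux_val_pos hxa'
  have hum : (x - a).val < m := ZMod.val_lt _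
  have huv : (x - a).val ≠ (b - a).val := aux_val_ne hxb
  have huv' : (x + 1 - a).val ≠ (b - a).val := aux_val_ne hxb'
  have h1 : (x + 1 - a).val = ((x - a).val + 1) % m := by
    have he : x + 1 - a = (x - a) + 1 := by ring
    rw [he, ZMod.val_add, ZMod.val_one]
  have h2 : (x + 1 - a).val = (x - a).val + 1 := by
    rcases Nat.lt_or_ge ((x - a).val + 1) m with h | h
    · rw [h1, Nat.mod_eq_of_lt h]
    · exfalso
      have hem : (x - a).val + 1 = m := by omega
      rw [h1, hem, Nat.mod_self] at hu0'
      omega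
  unfold InArc
  rw [h2]
  omega

lemma aux_not_inArc_adj [NeZero m] (hm1 : 1 < m) (i z : ZMod m) : ¬ InArc m i (i + 1) z := by
  haveI : Fact (1 < m) := ⟨hm1⟩
  rintro ⟨h1, h2⟩
  rw [show i + 1 - i = 1 by ring, ZMod.val_one] at h2
  omega

lemma aux_no_cross₁ [NeZero m] (hm1 : 1 < m) {i c d : ZMod m} :
    ¬ Crosses m i (i + 1) c d := by
  rintro ⟨h1, h2, h3, h4, h5, h6, h7⟩
  have hL : ¬ InArc m i (i + 1) c := aux_not_inArc_adj hm1 i c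
  have hR : InArc m (i + 1) i d := by
    rw [aux_inArc_compl (Ne.symm h1) h6 h5]
    exact aux_not_inArc_adj hm1 i d
  exact hL (h7.mpr hR)

lemma aux_no_cross₂ [NeZero m] (hm1 : 1 < m) {i c d : ZMod m} :
    ¬ Crosses m (i + 1) i c d := by
  rintro ⟨h1, h2, h3, h4, h5, h6, h7⟩
  have hL : InArc m (i + 1) i c := by
    rw [aux_inArc_compl h1 h3 h4]
    exact aux_not_inArc_adj hm1 i c
  exact aux_not_inArc_adj hm1 i d (h7.mp hL)

lemma aux_no_cross₃ [NeZero m] (hm1 : 1 < m) {a b i : ZMod m} :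
    ¬ Crosses m a b i (i + 1) := by
  rintro ⟨h1, h2, h3, h4, h5, h6, h7⟩
  have hR : InArc m b a (i + 1) ↔ ¬ InArc m a b (i + 1) :=
    aux_inArc_compl (Ne.symm h1) h6 h5
  have hS : InArc m a b i ↔ InArc m a b (i + 1) := aux_inArc_step hm1 h3 h4 h5 h6
  tauto

lemma aux_no_cross₄ [NeZero m] (hm1 : 1 < m) {a b i : ZMod m} :
    ¬ Crosses m a b (i + 1) i := by
  rintro ⟨h1, h2, h3, h4, h5, h6, h7⟩
  have hR : InArc m b a i ↔ ¬ InArc m a b i := aux_inArc_compl (Ne.symm h1) h6 h5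
  have hS : InArc m a b i ↔ InArc m a b (i + 1) := aux_inArc_step hm1 h5 h6 h3 h4
  tauto

/-- If `η` matches `i` with `i+1` then any single uncrossing move preserves this. -/
lemma aux_move_preserves (n : ℕ) (hn : 1 ≤ n) (η τ' : ZMod (2 * n) → ZMod (2 * n))
    (hη : IsMatching n η) (hm : UncrossingMove n η τ') (i : ZMod (2 * n))
    (h : η i = i + 1) : τ' i = i + 1 := by
  haveI : NeZero (2 * n) := ⟨by omega⟩
  have hm1 : 1 < 2 * n := by omega
  have hinv : η (i + 1) = i := by rw [← h]; exact hη.1 i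
  obtain ⟨a, b, hc, hτ'⟩ := hm
  have hai : a ≠ i := by
    rintro rfl; rw [h] at hc; exact aux_no_cross₁ hm1 hc
  have hai' : a ≠ i + 1 := by
    rintro rfl; rw [hinv] at hc; exact aux_no_cross₂ hm1 hc
  have hbi : b ≠ i := by
    rintro rfl; rw [h] at hc; exact aux_no_cross₃ hm1 hc
  have hbi' : b ≠ i + 1 := by
    rintro rfl; rw [hinv] at hc; exact aux_no_cross₄ hm1 hc
  have hηa : i ≠ η a := fun he => hai' (by rw [← h, he, hη.1])
  have hηb : i ≠ η b := fun he => hbi' (by rw [← h, he, hη.1])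
  rcases hτ' with rfl | rfl
  · unfold swapPair
    rw [if_neg (Ne.symm hai), if_neg (Ne.symm hbi), if_neg hηa, if_neg hηb]
    exact h
  · unfold swapPair
    rw [if_neg (Ne.symm hai), if_neg hηb, if_neg hηa,
      if_neg (show i ≠ η (η b) by rw [hη.1]; exact Ne.symm hbi)]
    exact h

end AuxLemmas

/-- If `τ ≤ η` in the uncrossing order and `i ∈ A(τ)`, then `i ∉ C(η)`,
i.e. `η i ≠ i + 1`. -/
theorem inA_le_not_inC (n : ℕ) (hn : 1 ≤ n)
    (τ η : ZMod (2 * n) → ZMod (2 * n))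
    (hτ : IsMatching n τ) (hη : IsMatching n η)
    (hle : UncrossLE n τ η) (i : ZMod (2 * n)) (hi : inA n τ i) :
    η i ≠ i + 1 := by
  have key : ∀ σ, UncrossLE n τ σ → σ i = i + 1 → τ i = i + 1 := by
    intro σ hle'
    induction hle' with
    | refl => exact id
    | tail hab hbc ih =>
        exact fun h => ih (aux_move_preserves n hn _ _ hbc.2.1 hbc.2.2.1 i h)
  exact fun hcon => hi.1 (key η hle hcon)
end

section
/- Suppose τ ≤ η in the uncrossing partial order on P_n and i ∈ A(τ) ∩ B(η). Then τ ≤ s_i·η and s_i·τ ≤ η. -/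
open scoped Classical

/-!
Induction along a chain of covers `τ = τ₀ ⋖ τ₁ ⋖ ⋯ ⋖ τₖ = η`, proving at the same time that
`i ∈ A(τ) ∩ A(η)` implies `s_i·τ ≤ s_i·η`. As the chord `{i, i+1}` crosses nothing, it is never
moved, so `i ∉ C(ρ)` for all `ρ ≥ τ`. Three facts about a cover then drive the induction:
`s_i·η ⋖ η` whenever `i ∈ B(η)`; conjugation by `s_i` maps a cover `ρ ⋖ σ` with `i` in
`A(ρ) ∩ A(σ)` or in `B(ρ) ∩ B(σ)` to a cover; and a cover `ρ ⋖ η` with `i ∈ A(ρ) ∩ B(η)` is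
`η = s_i·ρ`: conjugating any other move by `s_i` gives an uncrossing move from `s_i·η` down to
`s_i·ρ`, although `c(s_i·η) = c(η) - 1 = c(ρ) < c(s_i·ρ)`. Crossing numbers are compared locally:
matchings that agree outside the endpoints of two chords differ only in the crossings involving
those chords, and a chord crosses at most as many of two opposite sides of a crossing
quadrilateral as of its diagonals, so every uncrossing move strictly lowers `c`.
-/

section Circle

variable {m : ℕ} [NeZero m] {a b c d i p q x y z : ZMod m}

theorem ZMod.val_sub_add_val_sub (o x y : ZMod m) :
    (x - y).val + (y - o).val = (x - o).val ∨
      (x - y).val + (y - o).val = (x - o).val + m := by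
  have h := ZMod.val_add (x - y) (y - o)
  rw [sub_add_sub_cancel] at h
  have := ZMod.val_lt (x - y)
  have := ZMod.val_lt (y - o)
  rcases Nat.lt_or_ge ((x - y).val + (y - o).val) m with hlt | hge
  · rw [Nat.mod_eq_of_lt hlt] at h; omega
  · rw [Nat.mod_eq_sub_mod hge, Nat.mod_eq_of_lt (by omega)] at h; omega

omit [NeZero m] in
theorem ZMod.val_sub_pos (h : x ≠ y) : 0 < (x - y).val := by
  rwa [Nat.pos_iff_ne_zero, ne_eq, ZMod.val_eq_zero, sub_eq_zero]

theorem ZMod.val_sub_ne_val_sub (h : x ≠ y) (o : ZMod m) : (x - o).val ≠ (y - o).val :=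
  fun hv => h (sub_left_injective (ZMod.val_injective m hv))

omit [NeZero m] in
theorem inArc_iff (hx : x ≠ a) : InArc m a b x ↔ (x - a).val < (b - a).val :=
  and_iff_right (ZMod.val_sub_pos hx)

theorem inArc_comm_iff (hab : a ≠ b) (ha : x ≠ a) (hb : x ≠ b) :
    InArc m b a x ↔ ¬ InArc m a b x := by
  rw [inArc_iff ha, inArc_iff hb]
  have hx := ZMod.val_sub_add_val_sub b x a
  have hab' := ZMod.val_sub_add_val_sub a a b
  rw [sub_self, ZMod.val_zero] at hab'
  have := ZMod.val_sub_pos hab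
  have := ZMod.val_sub_pos hab.symm
  have := ZMod.val_sub_pos ha
  have := ZMod.val_sub_pos hb
  have := ZMod.val_lt (x - a)
  have := ZMod.val_lt (x - b)
  have := ZMod.val_lt (a - b)
  have := ZMod.val_lt (b - a)
  rcases hx with hx | hx <;> rcases hab' with hab' | hab' <;> omega

theorem crosses_iff : Crosses m a b c d ↔ a ≠ b ∧ c ≠ d ∧ c ≠ a ∧ c ≠ b ∧ d ≠ a ∧ d ≠ b ∧
    (InArc m a b c ↔ ¬ InArc m a b d) := by
  unfold Crosses
  constructor
  · rintro ⟨h1, h2, h3, h4, h5, h6, h⟩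
    exact ⟨h1, h2, h3, h4, h5, h6, h.trans (inArc_comm_iff h1 h5 h6)⟩
  · rintro ⟨h1, h2, h3, h4, h5, h6, h⟩
    exact ⟨h1, h2, h3, h4, h5, h6, h.trans (inArc_comm_iff h1 h5 h6).symm⟩

theorem crosses_iff_val : Crosses m a b c d ↔ a ≠ b ∧ c ≠ d ∧ c ≠ a ∧ c ≠ b ∧ d ≠ a ∧ d ≠ b ∧
    ((c - a).val < (b - a).val ↔ ¬ (d - a).val < (b - a).val) := by
  rw [crosses_iff]
  constructor
  · rintro ⟨h1, h2, h3, h4, h5, h6, h⟩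
    exact ⟨h1, h2, h3, h4, h5, h6, by rwa [inArc_iff h3, inArc_iff h5] at h⟩
  · rintro ⟨h1, h2, h3, h4, h5, h6, h⟩
    exact ⟨h1, h2, h3, h4, h5, h6, by rwa [inArc_iff h3, inArc_iff h5]⟩

namespace Crosses

theorem swap_right (H : Crosses m a b c d) : Crosses m a b d c := by
  rw [crosses_iff] at H ⊢
  obtain ⟨h1, h2, h3, h4, h5, h6, h⟩ := H
  exact ⟨h1, h2.symm, h5, h6, h3, h4, by tauto⟩

theorem swap_left (H : Crosses m a b c d) : Crosses m b a c d := by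
  rw [crosses_iff] at H ⊢
  obtain ⟨h1, h2, h3, h4, h5, h6, h⟩ := H
  refine ⟨h1.symm, h2, h4, h3, h6, h5, ?_⟩
  rw [inArc_comm_iff h1 h3 h4, inArc_comm_iff h1 h5 h6]
  tauto

theorem symm (H : Crosses m a b c d) : Crosses m c d a b := by
  rw [crosses_iff_val] at H ⊢
  obtain ⟨h1, h2, h3, h4, h5, h6, h⟩ := H
  refine ⟨h2, h1, h3.symm, h5.symm, h4.symm, h6.symm, ?_⟩
  have hac := ZMod.val_sub_add_val_sub a a c
  rw [sub_self, ZMod.val_zero] at hac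
  have hdc := ZMod.val_sub_add_val_sub a d c
  have hbc := ZMod.val_sub_add_val_sub a b c
  have := ZMod.val_sub_pos h3
  have := ZMod.val_sub_pos h3.symm
  have := ZMod.val_sub_pos h5
  have := ZMod.val_sub_pos h1.symm
  have := ZMod.val_sub_ne_val_sub h2 a
  have := ZMod.val_sub_ne_val_sub h4 a
  have := ZMod.val_sub_ne_val_sub h6 a
  have := ZMod.val_lt (a - c)
  have := ZMod.val_lt (b - c)
  have := ZMod.val_lt (d - c)
  have := ZMod.val_lt (b - a)
  have := ZMod.val_lt (c - a)
  have := ZMod.val_lt (d - a)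
  rcases hac with hac | hac <;> rcases hdc with hdc | hdc <;> rcases hbc with hbc | hbc <;> omega

end Crosses

theorem crosses_comm : Crosses m a b c d ↔ Crosses m c d a b := ⟨.symm, .symm⟩

theorem crosses_swap_left : Crosses m b a c d ↔ Crosses m a b c d := ⟨.swap_left, .swap_left⟩

namespace Crosses

theorem not_crosses_sides (H : Crosses m a p b q) : ¬ Crosses m a b p q := by
  rw [crosses_iff_val] at H ⊢
  obtain ⟨-, h2, -, h4, -, h6, h⟩ := H
  rintro ⟨-, -, -, -, -, -, h'⟩
  have := ZMod.val_sub_ne_val_sub h2 a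
  have := ZMod.val_sub_ne_val_sub h4 a
  have := ZMod.val_sub_ne_val_sub h6 a
  omega

theorem inArc_of_inArc (H : Crosses m a p b q) (ha : InArc m y z a) (hp : InArc m y z p)
    (hb : ¬ InArc m y z b) : InArc m y z q := by
  rw [crosses_iff_val] at H
  obtain ⟨h1, h2, h3, h4, h5, h6, h⟩ := H
  unfold InArc at *
  have hb' := ZMod.val_sub_add_val_sub y b a
  have hp' := ZMod.val_sub_add_val_sub y p a
  have hq' := ZMod.val_sub_add_val_sub y q a
  have := ZMod.val_sub_pos h1.symm
  have := ZMod.val_sub_pos h3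
  have := ZMod.val_sub_pos h5
  have := ZMod.val_sub_ne_val_sub h2 a
  have := ZMod.val_sub_ne_val_sub h4 a
  have := ZMod.val_sub_ne_val_sub h6 a
  have := ZMod.val_lt (a - y)
  have := ZMod.val_lt (b - y)
  have := ZMod.val_lt (p - y)
  have := ZMod.val_lt (q - y)
  have := ZMod.val_lt (z - y)
  have := ZMod.val_lt (b - a)
  have := ZMod.val_lt (p - a)
  have := ZMod.val_lt (q - a)
  rcases hb' with hb' | hb' <;> rcases hp' with hp' | hp' <;> rcases hq' with hq' | hq' <;>
    omega

theorem ite_crosses_sides_le (H : Crosses m a p b q) (hyz : y ≠ z)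
    (hy : y ∉ ({a, p, b, q} : Finset (ZMod m))) (hz : z ∉ ({a, p, b, q} : Finset (ZMod m))) :
    (if Crosses m a b y z then 1 else 0) + (if Crosses m p q y z then 1 else 0) ≤
      (if Crosses m a p y z then 1 else 0) + (if Crosses m b q y z then 1 else 0) := by
  simp only [Finset.mem_insert, Finset.mem_singleton, not_or] at hy hz
  obtain ⟨hya, hyp, hyb, hyq⟩ := hy
  obtain ⟨hza, hzp, hzb, hzq⟩ := hz
  obtain ⟨hap, hbq, hba, -, -, hqp, -⟩ := crosses_iff.mp H
  simp only [crosses_comm (c := y), crosses_iff, ne_eq, hyz, Ne.symm hya, Ne.symm hyp, Ne.symm hyb,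
    Ne.symm hyq, Ne.symm hza, Ne.symm hzp, Ne.symm hzb, Ne.symm hzq, Ne.symm hba, hap,
    hbq, Ne.symm hqp, not_false_eq_true, true_and]
  -- The arc from `y` to `z` cannot hold exactly one of the crossing chords `{a, p}`, `{b, q}`;
  -- these are the only two patterns that would violate the inequality.
  have h₁ := H.inArc_of_inArc (y := y) (z := z)
  have h₂ := H.symm.inArc_of_inArc (y := y) (z := z)
  by_cases InArc m y z a <;> by_cases InArc m y z b <;> by_cases InArc m y z p <;>
    by_cases InArc m y z q <;> simp_all

end Crosses

end Circle

section Adjacent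

variable {m : ℕ} [Fact (1 < m)] {a b c d i x y : ZMod m}

theorem ZMod.val_add_one_sub_self (i : ZMod m) : (i + 1 - i).val = 1 := by
  simp [ZMod.val_one]

theorem ZMod.two_le_val_sub (h : x ≠ i) (h' : x ≠ i + 1) : 2 ≤ (x - i).val := by
  have := ZMod.val_sub_pos h
  have := ZMod.val_sub_ne_val_sub h' i
  rw [ZMod.val_add_one_sub_self] at this
  omega

theorem not_crosses_add_one : ¬ Crosses m i (i + 1) c d := by
  have hempty : ∀ x, ¬ InArc m i (i + 1) x := fun x ⟨h, h'⟩ => by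
    rw [ZMod.val_add_one_sub_self] at h'; omega
  rw [crosses_iff]
  rintro ⟨-, -, -, -, -, -, h⟩
  exact hempty d (not_not.mp (h.not.mp (hempty c)))

theorem inArc_add_one_iff (hc : c ≠ i) (hc' : c ≠ i + 1) (hd : d ≠ i + 1) :
    InArc m c d (i + 1) ↔ InArc m c d i := by
  rw [inArc_iff hc'.symm, inArc_iff hc.symm]
  have h := ZMod.val_sub_add_val_sub c (i + 1) i
  rw [ZMod.val_add_one_sub_self] at h
  have := ZMod.val_sub_pos hc'.symm
  have := ZMod.val_sub_ne_val_sub hd c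
  have := ZMod.val_lt (i - c)
  omega

theorem inArc_swap_iff (hc : c ≠ i) (hc' : c ≠ i + 1) (hd : d ≠ i) (hd' : d ≠ i + 1) :
    InArc m c d (Equiv.swap i (i + 1) x) ↔ InArc m c d x := by
  rcases eq_or_ne x i with rfl | hi
  · rw [Equiv.swap_apply_left, inArc_add_one_iff hc hc' hd']
  rcases eq_or_ne x (i + 1) with rfl | hi'
  · rw [Equiv.swap_apply_right, inArc_add_one_iff hc hc' hd']
  · rw [Equiv.swap_apply_of_ne_of_ne hi hi']

theorem crosses_swap_iff (hc : c ≠ i) (hc' : c ≠ i + 1) (hd : d ≠ i) (hd' : d ≠ i + 1) :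
    Crosses m (Equiv.swap i (i + 1) a) (Equiv.swap i (i + 1) b) c d ↔ Crosses m a b c d := by
  have hs : ∀ {u v : ZMod m}, v ≠ i → v ≠ i + 1 → (Equiv.swap i (i + 1) u ≠ v ↔ u ≠ v) :=
    fun hv hv' => by rw [ne_eq, Equiv.swap_apply_eq_iff, Equiv.swap_apply_of_ne_of_ne hv hv']
  rw [crosses_comm, crosses_iff, crosses_comm, crosses_iff, inArc_swap_iff hc hc' hd hd',
    inArc_swap_iff hc hc' hd hd', hs hc hc', hs hd hd', hs hc hc', hs hd hd',
    (Equiv.swap i (i + 1)).injective.ne_iff]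

theorem crosses_add_one_iff (hx : x ≠ i) (hx' : x ≠ i + 1) (hy : y ≠ i) (hy' : y ≠ i + 1)
    (hxy : x ≠ y) : Crosses m i x (i + 1) y ↔ (x - i).val < (y - i).val := by
  rw [crosses_iff_val, ZMod.val_add_one_sub_self]
  have := ZMod.two_le_val_sub hx hx'
  have := ZMod.val_sub_ne_val_sub hxy i
  constructor
  · rintro ⟨-, -, -, -, -, -, h⟩; omega
  · intro h
    exact ⟨hx.symm, hy'.symm, add_ne_left.mpr one_ne_zero, hx'.symm, hy, hxy.symm, by omega⟩

theorem crosses_add_one_comm_iff (hx : x ≠ i) (hx' : x ≠ i + 1) (hy : y ≠ i)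
    (hy' : y ≠ i + 1) (hxy : x ≠ y) :
    Crosses m i y (i + 1) x ↔ ¬ Crosses m i x (i + 1) y := by
  rw [crosses_add_one_iff hx hx' hy hy' hxy, crosses_add_one_iff hy hy' hx hx' hxy.symm]
  have := ZMod.val_sub_ne_val_sub hxy i
  omega

theorem crosses_add_one_left_iff (hb : b ≠ i) (hb' : b ≠ i + 1) (hc : c ≠ i) (hc' : c ≠ i + 1)
    (hd : d ≠ i) (hd' : d ≠ i + 1) : Crosses m (i + 1) b c d ↔ Crosses m i b c d := by
  simpa [Equiv.swap_apply_of_ne_of_ne hb hb'] using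
    crosses_swap_iff (a := i) (b := b) hc hc' hd hd'

end Adjacent

section Moves

variable {n : ℕ} {σ τ : ZMod (2 * n) → ZMod (2 * n)} {i a c x y : ZMod (2 * n)}

theorem IsMatching.involutive (h : IsMatching n τ) : Function.Involutive τ := h.1

theorem sMove_apply_swap (x : ZMod (2 * n)) :
    sMove n i τ (Equiv.swap i (i + 1) x) = Equiv.swap i (i + 1) (τ x) := by
  simp [sMove]

theorem sMove_sMove : sMove n i (sMove n i τ) = τ := by
  funext x; simp [sMove]

theorem IsMatching.sMove (h : IsMatching n τ) : IsMatching n (sMove n i τ) :=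
  ⟨fun x => by simp [_root_.sMove, h.1 _], fun x hx =>
    h.2 _ (by simpa [_root_.sMove, Equiv.swap_apply_eq_iff] using hx)⟩

theorem sMove_apply_of_ne (hx : x ≠ i) (hx' : x ≠ i + 1) (h : τ x ≠ i) (h' : τ x ≠ i + 1) :
    sMove n i τ x = τ x := by
  simp [sMove, Equiv.swap_apply_of_ne_of_ne hx hx', Equiv.swap_apply_of_ne_of_ne h h']

theorem sMove_apply_left (h : τ (i + 1) ≠ i) (h' : τ (i + 1) ≠ i + 1) :
    sMove n i τ i = τ (i + 1) := by
  simp [sMove, Equiv.swap_apply_of_ne_of_ne h h']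

theorem sMove_apply_right (h : τ i ≠ i) (h' : τ i ≠ i + 1) : sMove n i τ (i + 1) = τ i := by
  simp [sMove, Equiv.swap_apply_of_ne_of_ne h h']

theorem sMove_apply_apply (h : IsMatching n τ) (hx : τ x ≠ i) (hx' : τ x ≠ i + 1) :
    sMove n i τ (τ x) = Equiv.swap i (i + 1) x := by
  simp [sMove, Equiv.swap_apply_of_ne_of_ne hx hx', h.1 x]

theorem swapPair_apply_of_ne (h : x ≠ a) (h' : x ≠ c) (hσ : x ≠ σ a) (hσ' : x ≠ σ c) :
    swapPair n σ a c x = σ x := by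
  simp [swapPair, h, h', hσ, hσ']

theorem sMove_swapPair :
    sMove n i (swapPair n σ a c) =
      swapPair n (sMove n i σ) (Equiv.swap i (i + 1) a) (Equiv.swap i (i + 1) c) := by
  funext x
  obtain ⟨x, rfl⟩ := (Equiv.swap i (i + 1)).surjective x
  simp only [swapPair, sMove_apply_swap, (Equiv.swap i (i + 1)).apply_eq_iff_eq]
  split_ifs <;> rfl

theorem swapPair_comm (hac : a ≠ c) : swapPair n σ a c = swapPair n σ c a := by
  funext x
  simp only [swapPair]
  split_ifs <;> grind

theorem swapPair_apply_apply (hσ : IsMatching n σ) :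
    swapPair n σ (σ a) (σ c) = swapPair n σ a c := by
  have := hσ.1
  have := hσ.2
  funext x
  simp only [swapPair]
  split_ifs <;> grind

theorem swapPair_apply_left (hσ : IsMatching n σ) :
    swapPair n σ (σ a) c = swapPair n σ a (σ c) := by
  have := hσ.1
  have := hσ.2
  funext x
  simp only [swapPair]
  split_ifs <;> grind

theorem swapPair_eq_or_eq (hσ : IsMatching n σ) (ha : a = x ∨ a = σ x) (hc : c = y ∨ c = σ y) :
    swapPair n σ a c = swapPair n σ x y ∨ swapPair n σ a c = swapPair n σ x (σ y) := by
  rcases ha with rfl | rfl <;> rcases hc with rfl | rfl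
  · exact .inl rfl
  · exact .inr rfl
  · exact .inr (swapPair_apply_left hσ)
  · exact .inl (swapPair_apply_apply hσ)

theorem sMove_eq_swapPair [Fact (1 < 2 * n)] (hσ : IsMatching n σ) (hi : σ i ≠ i + 1) :
    sMove n i σ = swapPair n σ i (σ (i + 1)) := by
  have := hσ.1
  have := hσ.2
  have : i + 1 ≠ i := add_ne_left.mpr one_ne_zero
  funext x
  simp only [sMove, swapPair, Equiv.swap_apply_def]
  split_ifs <;> grind

end Moves

theorem Finset.sum_pair_pair {α M : Type*} [DecidableEq α] [AddCommMonoid M] {f : α → M}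
    {a a' c c' : α} (h₁ : a ≠ a') (h₂ : a ≠ c) (h₃ : a ≠ c') (h₄ : a' ≠ c) (h₅ : a' ≠ c')
    (h₆ : c ≠ c') (ha : f a' = f a) (hc : f c' = f c) :
    ∑ x ∈ {a, a', c, c'}, f x = 2 • (f a + f c) := by
  rw [Finset.sum_insert (by simp [h₁, h₂, h₃]), Finset.sum_insert (by simp [h₄, h₅]),
    Finset.sum_pair h₆, ha, hc, two_nsmul]
  abel

section Counting

variable {n : ℕ} {τ ρ σ : ZMod (2 * n) → ZMod (2 * n)} {a a' b c c' x x' y : ZMod (2 * n)}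

noncomputable def crossInd (n : ℕ) (τ : ZMod (2 * n) → ZMod (2 * n)) (x y : ZMod (2 * n)) : ℕ :=
  if Crosses (2 * n) x (τ x) y (τ y) then 1 else 0

theorem crossInd_self : crossInd n τ x x = 0 :=
  if_neg fun H => H.2.2.1 rfl

variable [NeZero (2 * n)]

theorem crossInd_comm : crossInd n τ x y = crossInd n τ y x :=
  if_congr crosses_comm rfl rfl

theorem crossInd_of_apply (h : τ x = x') (h' : τ x' = x) :
    crossInd n τ x' y = crossInd n τ x y := by
  unfold crossInd
  rw [h, h', crosses_swap_left]

noncomputable def crossSum (n : ℕ) [NeZero (2 * n)] (τ : ZMod (2 * n) → ZMod (2 * n)) : ℕ :=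
  ∑ x, ∑ y, crossInd n τ x y

/-- The number of ordered pairs `(x, y)` with `x ∈ S` or `y ∈ S` whose chords cross. -/
noncomputable def crossSumNear (n : ℕ) [NeZero (2 * n)] (τ : ZMod (2 * n) → ZMod (2 * n))
    (S : Finset (ZMod (2 * n))) : ℕ :=
  ∑ x ∈ S, ∑ y ∈ S, crossInd n τ x y + 2 * ∑ x ∈ S, ∑ y ∈ Sᶜ, crossInd n τ x y

theorem crossNum_eq_crossSum_div (τ : ZMod (2 * n) → ZMod (2 * n)) :
    crossNum n τ = crossSum n τ / 8 := by
  have h : {p : ZMod (2 * n) × ZMod (2 * n) | Crosses (2 * n) p.1 (τ p.1) p.2 (τ p.2)} =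
      ↑(Finset.univ.filter fun p : ZMod (2 * n) × ZMod (2 * n) =>
        Crosses (2 * n) p.1 (τ p.1) p.2 (τ p.2)) := by
    ext; simp
  rw [crossNum, h, Set.ncard_coe_finset, Finset.card_filter, Fintype.sum_prod_type]
  rfl

theorem crossSum_eq (τ : ZMod (2 * n) → ZMod (2 * n)) (S : Finset (ZMod (2 * n))) :
    crossSum n τ = crossSumNear n τ S + ∑ x ∈ Sᶜ, ∑ y ∈ Sᶜ, crossInd n τ x y := by
  have hsplit : ∀ x, ∑ y, crossInd n τ x y =
      ∑ y ∈ S, crossInd n τ x y + ∑ y ∈ Sᶜ, crossInd n τ x y :=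
    fun x => (Finset.sum_add_sum_compl S _).symm
  have hflip : ∑ x ∈ Sᶜ, ∑ y ∈ S, crossInd n τ x y = ∑ x ∈ S, ∑ y ∈ Sᶜ, crossInd n τ x y := by
    rw [Finset.sum_comm]
    simp only [crossInd_comm (x := _)]
  rw [crossSum, crossSumNear, ← Finset.sum_add_sum_compl S,
    Finset.sum_congr rfl fun x _ => hsplit x, Finset.sum_congr rfl fun x _ => hsplit x,
    Finset.sum_add_distrib, Finset.sum_add_distrib, hflip]
  ring

theorem crossSum_add_crossSumNear (S : Finset (ZMod (2 * n))) (h : ∀ x ∉ S, ρ x = σ x) :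
    crossSum n ρ + crossSumNear n σ S = crossSum n σ + crossSumNear n ρ S := by
  have hfar : ∑ x ∈ Sᶜ, ∑ y ∈ Sᶜ, crossInd n ρ x y = ∑ x ∈ Sᶜ, ∑ y ∈ Sᶜ, crossInd n σ x y :=
    Finset.sum_congr rfl fun x hx => Finset.sum_congr rfl fun y hy => by
      rw [Finset.mem_compl] at hx hy
      simp only [crossInd, h x hx, h y hy]
  rw [crossSum_eq ρ S, crossSum_eq σ S, hfar]
  ring

theorem crossNum_lt_of_crossSumNear (S : Finset (ZMod (2 * n))) (h : ∀ x ∉ S, ρ x = σ x)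
    (hS : crossSumNear n ρ S + 8 ≤ crossSumNear n σ S) : crossNum n ρ < crossNum n σ := by
  have := crossSum_add_crossSumNear S h
  rw [crossNum_eq_crossSum_div, crossNum_eq_crossSum_div]
  omega

theorem crossNum_add_one_of_crossSumNear (S : Finset (ZMod (2 * n))) (h : ∀ x ∉ S, ρ x = σ x)
    (hS : crossSumNear n σ S = crossSumNear n ρ S + 8) : crossNum n ρ + 1 = crossNum n σ := by
  have := crossSum_add_crossSumNear S h
  rw [crossNum_eq_crossSum_div, crossNum_eq_crossSum_div]
  omega

theorem crossSumNear_pair_pair (h₁ : a ≠ a') (h₂ : a ≠ c) (h₃ : a ≠ c') (h₄ : a' ≠ c)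
    (h₅ : a' ≠ c') (h₆ : c ≠ c') (ha : τ a = a') (ha' : τ a' = a) (hc : τ c = c')
    (hc' : τ c' = c) :
    crossSumNear n τ {a, a', c, c'} = 8 * crossInd n τ a c +
      4 * ∑ y ∈ {a, a', c, c'}ᶜ, (crossInd n τ a y + crossInd n τ c y) := by
  have hpair : ∀ g : ZMod (2 * n) → ℕ, g a' = g a → g c' = g c →
      ∑ x ∈ {a, a', c, c'}, g x = 2 * (g a + g c) :=
    fun g hga hgc => Finset.sum_pair_pair h₁ h₂ h₃ h₄ h₅ h₆ hga hgc
  have hleft : ∀ y, crossInd n τ a' y = crossInd n τ a y ∧ crossInd n τ c' y = crossInd n τ c y :=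
    fun y => ⟨crossInd_of_apply ha ha', crossInd_of_apply hc hc'⟩
  have hright : ∀ x, crossInd n τ x a' = crossInd n τ x a ∧ crossInd n τ x c' = crossInd n τ x c :=
    fun x => by simp only [crossInd_comm (x := x), hleft, and_self]
  have hnear : ∑ x ∈ {a, a', c, c'}, ∑ y ∈ {a, a', c, c'}, crossInd n τ x y =
      8 * crossInd n τ a c := by
    simp only [hpair _ (hright _).1 (hright _).2]
    rw [hpair _ (by simp only [hleft]) (by simp only [hleft]),
      crossInd_self, crossInd_self, crossInd_comm (x := c)]
    ring
  have hfar : ∑ y ∈ {a, a', c, c'}ᶜ, ∑ x ∈ {a, a', c, c'}, crossInd n τ x y =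
      2 * ∑ y ∈ {a, a', c, c'}ᶜ, (crossInd n τ a y + crossInd n τ c y) := by
    rw [Finset.mul_sum]
    exact Finset.sum_congr rfl fun y _ => hpair _ (hleft y).1 (hleft y).2
  rw [crossSumNear, Finset.sum_comm (s := {a, a', c, c'}) (t := _ᶜ), hnear, hfar]
  ring

theorem crossNum_swapPair_lt (hσ : IsMatching n σ) (H : Crosses (2 * n) a (σ a) b (σ b)) :
    crossNum n (swapPair n σ a b) < crossNum n σ := by
  set ρ := swapPair n σ a b
  obtain ⟨h₁, h₂, h₃, h₄, h₅, h₆, -⟩ := id H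
  have hinv := hσ.involutive
  have hρa : ρ a = b := by simp [ρ, swapPair]
  have hρb : ρ b = a := by simp [ρ, swapPair, h₃]
  have hρσa : ρ (σ a) = σ b := by simp [ρ, swapPair, h₁.symm, h₄.symm]
  have hρσb : ρ (σ b) = σ a := by simp [ρ, swapPair, h₅, h₂.symm, h₆]
  set S : Finset (ZMod (2 * n)) := {a, σ a, b, σ b}
  have hS : S = {a, b, σ a, σ b} := by simp only [S, Finset.insert_comm]
  have hfar : ∀ y ∉ S, ρ y = σ y ∧ y ≠ σ y ∧ σ y ∉ S := by
    intro y hy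
    simp only [S, Finset.mem_insert, Finset.mem_singleton, not_or] at hy ⊢
    obtain ⟨hya, hyσa, hyb, hyσb⟩ := hy
    refine ⟨swapPair_apply_of_ne hya hyb hyσa hyσb, (hσ.2 y).symm, ?_⟩
    simp only [hinv.eq_iff, hinv a, hinv b]
    exact ⟨hyσa, hya, hyσb, hyb⟩
  have hnearσ : crossSumNear n σ S =
      8 * crossInd n σ a b + 4 * ∑ y ∈ Sᶜ, (crossInd n σ a y + crossInd n σ b y) :=
    crossSumNear_pair_pair h₁ h₃.symm h₅.symm h₄.symm h₆.symm h₂ rfl (hinv a) rfl (hinv b)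
  have hnearρ := crossSumNear_pair_pair (τ := ρ) h₃.symm h₁ h₅.symm h₄ h₂ h₆.symm hρa hρb hρσa
    hρσb
  rw [← hS] at hnearρ
  have hac : crossInd n σ a b = 1 := if_pos H
  have hac' : crossInd n ρ a (σ a) = 0 := by
    rw [crossInd, hρa, hρσa]; exact if_neg H.not_crosses_sides
  have hmixed : ∑ y ∈ Sᶜ, (crossInd n ρ a y + crossInd n ρ (σ a) y) ≤
      ∑ y ∈ Sᶜ, (crossInd n σ a y + crossInd n σ b y) := by
    refine Finset.sum_le_sum fun y hy => ?_
    rw [Finset.mem_compl] at hy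
    obtain ⟨hρy, hyy, hσy⟩ := hfar y hy
    simp only [crossInd, hρa, hρσa, hρy]
    exact H.ite_crosses_sides_le hyy hy hσy
  exact crossNum_lt_of_crossSumNear S (fun y hy => (hfar y hy).1) (by omega)

theorem UncrossingMove.exists_swapPair (hσ : IsMatching n σ) (h : UncrossingMove n σ ρ) :
    ∃ a c, Crosses (2 * n) a (σ a) c (σ c) ∧ ρ = swapPair n σ a c := by
  obtain ⟨a, b, H, rfl | rfl⟩ := h
  · exact ⟨a, b, H, rfl⟩
  · exact ⟨a, σ b, by rw [hσ.1]; exact H.swap_right, rfl⟩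

theorem UncrossingMove.crossNum_lt (hσ : IsMatching n σ) (h : UncrossingMove n σ ρ) :
    crossNum n ρ < crossNum n σ := by
  obtain ⟨a, c, H, rfl⟩ := h.exists_swapPair hσ
  exact crossNum_swapPair_lt hσ H

def UncrossCover (n : ℕ) (ρ σ : ZMod (2 * n) → ZMod (2 * n)) : Prop :=
  IsMatching n ρ ∧ IsMatching n σ ∧ UncrossingMove n σ ρ ∧ crossNum n σ = crossNum n ρ + 1

section Lifting

variable {n : ℕ} [Fact (1 < 2 * n)] {τ ρ σ η : ZMod (2 * n) → ZMod (2 * n)} {i a c : ZMod (2 * n)}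

theorem crossNum_sMove_add_one (hη : IsMatching n η) (hB : inB n η i) :
    crossNum n (sMove n i η) + 1 = crossNum n η := by
  obtain ⟨-, H⟩ := hB
  obtain ⟨h₁, h₂, h₃, h₄, h₅, h₆, -⟩ := id H
  have hinv := hη.involutive
  set η' := sMove n i η
  have e₁ : η' i = η (i + 1) := sMove_apply_left h₅ h₂.symm
  have e₂ : η' (η (i + 1)) = i :=
    (sMove_apply_apply hη h₅ h₂.symm).trans (Equiv.swap_apply_right _ _)
  have e₃ : η' (i + 1) = η i := sMove_apply_right (hη.2 i) h₄.symm
  have e₄ : η' (η i) = i + 1 :=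
    (sMove_apply_apply hη (hη.2 i) h₄.symm).trans (Equiv.swap_apply_left _ _)
  set S : Finset (ZMod (2 * n)) := {i, η i, i + 1, η (i + 1)}
  have hS : S = {i, η (i + 1), i + 1, η i} := by
    ext; simp only [S, Finset.mem_insert, Finset.mem_singleton]; tauto
  have hfar : ∀ y ∉ S, η' y = η y ∧ y ≠ i ∧ y ≠ i + 1 ∧ η y ≠ i ∧ η y ≠ i + 1 := by
    intro y hy
    simp only [S, Finset.mem_insert, Finset.mem_singleton, not_or] at hy
    obtain ⟨hyi, hyηi, hyi', hyηi'⟩ := hy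
    have hηy : η y ≠ i ∧ η y ≠ i + 1 := by simp only [ne_eq, hinv.eq_iff]; exact ⟨hyηi, hyηi'⟩
    exact ⟨sMove_apply_of_ne hyi hyi' hηy.1 hηy.2, hyi, hyi', hηy⟩
  have hnear : crossSumNear n η S =
      8 * crossInd n η i (i + 1) + 4 * ∑ y ∈ Sᶜ, (crossInd n η i y + crossInd n η (i + 1) y) :=
    crossSumNear_pair_pair h₁ h₃.symm h₅.symm h₄.symm h₆.symm h₂ rfl (hinv i) rfl (hinv _)
  have hnear' := crossSumNear_pair_pair (τ := η') h₅.symm h₃.symm h₁ h₂.symm h₆ h₄ e₁ e₂ e₃ e₄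
  rw [← hS] at hnear'
  have hcross : crossInd n η i (i + 1) = 1 := if_pos H
  have hcross' : crossInd n η' i (i + 1) = 0 := by
    rw [crossInd, e₁, e₃]
    exact if_neg fun H' =>
      (crosses_add_one_comm_iff (hη.2 i) h₄.symm h₅ h₂.symm h₆.symm).mp H' H
  have hmixed : ∑ y ∈ Sᶜ, (crossInd n η' i y + crossInd n η' (i + 1) y) =
      ∑ y ∈ Sᶜ, (crossInd n η i y + crossInd n η (i + 1) y) := by
    refine Finset.sum_congr rfl fun y hy => ?_
    obtain ⟨hη'y, hyi, hyi', hηyi, hηyi'⟩ := hfar y (Finset.mem_compl.mp hy)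
    simp only [crossInd, e₁, e₃, hη'y, crosses_add_one_left_iff h₅ h₂.symm hyi hyi' hηyi hηyi',
      crosses_add_one_left_iff (hη.2 i) h₄.symm hyi hyi' hηyi hηyi']
    omega
  exact crossNum_add_one_of_crossSumNear S (fun y hy => (hfar y hy).1) (by omega)

theorem UncrossingMove.apply_eq_add_one (hσ : IsMatching n σ) (h : UncrossingMove n σ ρ)
    (hi : σ i = i + 1) : ρ i = i + 1 := by
  have hi' : σ (i + 1) = i := by rw [← hi, hσ.1]
  have hfree : ∀ a c, Crosses (2 * n) a (σ a) c (σ c) → i ≠ a ∧ i ≠ σ a := by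
    intro a c H
    constructor
    · rintro rfl
      rw [hi] at H
      exact not_crosses_add_one H
    · intro h
      obtain rfl : a = i + 1 := by rw [← hi, h, hσ.1]
      rw [hi'] at H
      exact not_crosses_add_one H.swap_left
  obtain ⟨a, c, H, rfl⟩ := h.exists_swapPair hσ
  obtain ⟨ha, ha'⟩ := hfree a c H
  obtain ⟨hc, hc'⟩ := hfree c a H.symm
  rw [swapPair_apply_of_ne ha hc ha' hc', hi]

theorem uncrossingMove_sMove_swapPair (H : Crosses (2 * n) a (σ a) c (σ c))
    (hc : c ≠ i) (hc' : c ≠ i + 1) (hσc : σ c ≠ i) (hσc' : σ c ≠ i + 1) :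
    UncrossingMove n (sMove n i σ) (sMove n i (swapPair n σ a c)) := by
  refine ⟨Equiv.swap i (i + 1) a, c, ?_, .inl ?_⟩
  · rw [sMove_apply_swap, sMove_apply_of_ne hc hc' hσc hσc', crosses_swap_iff hc hc' hσc hσc']
    exact H
  · rw [sMove_swapPair, Equiv.swap_apply_of_ne_of_ne hc hc']

theorem swapPair_of_mem_chords (hσ : IsMatching n σ) (hσi : σ i ≠ i + 1)
    (ha : a = i ∨ a = σ i) (hc : c = i + 1 ∨ c = σ (i + 1)) :
    swapPair n σ a c i = i + 1 ∨ swapPair n σ a c = sMove n i σ := by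
  rcases swapPair_eq_or_eq hσ ha hc with h | h
  · exact .inl (by rw [h]; simp [swapPair])
  · exact .inr (h.trans (sMove_eq_swapPair hσ hσi).symm)

/-- The hypotheses on `ρ` exclude exactly the two moves that re-pair the chords through `i` and
`i + 1`. -/
theorem UncrossingMove.sMove (hσ : IsMatching n σ) (h : UncrossingMove n σ ρ) (hρ : ρ i ≠ i + 1)
    (hne : ρ ≠ sMove n i σ) : UncrossingMove n (sMove n i σ) (sMove n i ρ) := by
  have hσi : σ i ≠ i + 1 := fun hi => hρ (h.apply_eq_add_one hσ hi)
  obtain ⟨a, c, H, rfl⟩ := h.exists_swapPair hσ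
  obtain ⟨-, -, hca, -, hσca, -, -⟩ := id H
  by_cases hc : c ≠ i ∧ c ≠ i + 1 ∧ σ c ≠ i ∧ σ c ≠ i + 1
  · exact uncrossingMove_sMove_swapPair H hc.1 hc.2.1 hc.2.2.1 hc.2.2.2
  by_cases ha : a ≠ i ∧ a ≠ i + 1 ∧ σ a ≠ i ∧ σ a ≠ i + 1
  · rw [swapPair_comm hca.symm]
    exact uncrossingMove_sMove_swapPair H.symm ha.1 ha.2.1 ha.2.2.1 ha.2.2.2
  have hchord : ∀ x, ¬ (x ≠ i ∧ x ≠ i + 1 ∧ σ x ≠ i ∧ σ x ≠ i + 1) →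
      (x = i ∨ x = σ i) ∨ (x = i + 1 ∨ x = σ (i + 1)) := by
    intro x hx
    simp only [ne_eq, hσ.involutive.eq_iff] at hx
    tauto
  -- Both chords meet `{i, i + 1}`; being distinct, one passes through `i` and one through `i + 1`.
  exfalso
  rcases hchord a ha with ha | ha <;> rcases hchord c hc with hc | hc
  · rcases ha with rfl | rfl <;> rcases hc with rfl | rfl <;> simp [hσ.1] at hca hσca
  · exact (swapPair_of_mem_chords hσ hσi ha hc).elim hρ hne
  · rw [swapPair_comm hca.symm] at hρ hne
    exact (swapPair_of_mem_chords hσ hσi hc ha).elim hρ hne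
  · rcases ha with rfl | rfl <;> rcases hc with rfl | rfl <;> simp [hσ.1] at hca hσca

theorem UncrossLE.apply_eq_add_one (h : UncrossLE n ρ σ) (hi : σ i = i + 1) : ρ i = i + 1 := by
  induction h with
  | refl => exact hi
  | tail _ h ih => exact ih (h.2.2.1.apply_eq_add_one h.2.1 hi)

theorem inA_sMove_iff (hη : IsMatching n η) : inA n (sMove n i η) i ↔ inB n η i := by
  by_cases hi : η i = i + 1
  · have : sMove n i η i = i + 1 := by simp [sMove, ← hi, hη.1]
    exact iff_of_false (fun h => h.1 this) (fun h => h.1 hi)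
  have h₁ : η (i + 1) ≠ i := fun h => hi (hη.involutive.eq_iff.mpr h.symm)
  have h₂ : η i ≠ η (i + 1) := hη.involutive.injective.ne (add_ne_left.mpr one_ne_zero).symm
  rw [inA, inB, sMove_apply_left h₁ (hη.2 _), sMove_apply_right (hη.2 i) hi,
    crosses_add_one_comm_iff (hη.2 i) hi h₁ (hη.2 _) h₂, not_not]
  exact and_congr_left fun _ => iff_of_true (hη.2 _) hi

theorem inB_sMove_iff (hτ : IsMatching n τ) : inB n (sMove n i τ) i ↔ inA n τ i := by
  rw [← inA_sMove_iff hτ.sMove, sMove_sMove]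

theorem uncrossCover_sMove_of_inB (hη : IsMatching n η) (hB : inB n η i) :
    UncrossCover n (sMove n i η) η :=
  ⟨hη.sMove, hη, ⟨i, i + 1, hB.2, .inr (sMove_eq_swapPair hη hB.1)⟩,
    (crossNum_sMove_add_one hη hB).symm⟩

theorem uncrossCover_sMove_of_inA (hτ : IsMatching n τ) (hA : inA n τ i) :
    UncrossCover n τ (sMove n i τ) := by
  simpa only [sMove_sMove] using uncrossCover_sMove_of_inB hτ.sMove ((inB_sMove_iff hτ).mpr hA)

theorem UncrossCover.sMove_of_inB (h : UncrossCover n ρ σ) (hρ : inB n ρ i) (hσ : inB n σ i) :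
    UncrossCover n (sMove n i ρ) (sMove n i σ) := by
  obtain ⟨hρM, hσM, hmove, hcount⟩ := h
  refine ⟨hρM.sMove, hσM.sMove, hmove.sMove hσM hρ.1 fun heq => ?_, ?_⟩
  · exact ((inA_sMove_iff hσM).mpr hσ).2 (heq ▸ hρ.2)
  · have := crossNum_sMove_add_one hρM hρ
    have := crossNum_sMove_add_one hσM hσ
    omega

theorem UncrossCover.sMove_of_inA (h : UncrossCover n ρ σ) (hρ : inA n ρ i) (hσ : inA n σ i) :
    UncrossCover n (sMove n i ρ) (sMove n i σ) := by
  obtain ⟨hρM, hσM, hmove, hcount⟩ := h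
  refine ⟨hρM.sMove, hσM.sMove, hmove.sMove hσM hρ.1 fun heq => ?_, ?_⟩
  · exact hσ.2 ((inA_sMove_iff hσM).mp (heq ▸ hρ)).2
  · have := crossNum_sMove_add_one hρM.sMove ((inB_sMove_iff hρM).mpr hρ)
    have := crossNum_sMove_add_one hσM.sMove ((inB_sMove_iff hσM).mpr hσ)
    rw [sMove_sMove] at *
    omega

theorem UncrossCover.eq_sMove (h : UncrossCover n ρ η) (hρ : inA n ρ i) (hη : inB n η i) :
    η = sMove n i ρ := by
  obtain ⟨hρM, hηM, hmove, hcount⟩ := h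
  by_contra hne
  have hlt := (hmove.sMove hηM hρ.1 fun heq => hne (by rw [heq, sMove_sMove])).crossNum_lt hηM.sMove
  have := crossNum_sMove_add_one hηM hη
  have := crossNum_sMove_add_one hρM.sMove ((inB_sMove_iff hρM).mpr hρ)
  rw [sMove_sMove] at this
  omega

theorem UncrossLE.lift (hle : UncrossLE n τ η) (hτ : inA n τ i) :
    (inB n η i → UncrossLE n τ (sMove n i η) ∧ UncrossLE n (sMove n i τ) η) ∧
      (inA n η i → UncrossLE n (sMove n i τ) (sMove n i η)) := by
  induction hle with
  | refl => exact ⟨fun hB => absurd hB.2 hτ.2, fun _ => .refl⟩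
  | @tail ρ σ hτρ hρσ ih =>
    change UncrossLE n τ ρ at hτρ
    change UncrossCover n ρ σ at hρσ
    have hρi : ρ i ≠ i + 1 := fun h => hτ.1 (hτρ.apply_eq_add_one h)
    by_cases hcross : Crosses (2 * n) i (ρ i) (i + 1) (ρ (i + 1))
    · obtain ⟨h₁, h₂⟩ := ih.1 ⟨hρi, hcross⟩
      exact ⟨fun hB => ⟨.tail h₁ (hρσ.sMove_of_inB ⟨hρi, hcross⟩ hB), .tail h₂ hρσ⟩,
        fun hA => .tail (.tail h₂ hρσ) (uncrossCover_sMove_of_inA hρσ.2.1 hA)⟩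
    · refine ⟨fun hB => ?_, fun hA =>
        .tail (ih.2 ⟨hρi, hcross⟩) (hρσ.sMove_of_inA ⟨hρi, hcross⟩ hA)⟩
      rw [hρσ.eq_sMove ⟨hρi, hcross⟩ hB, sMove_sMove]
      exact ⟨hτρ, ih.2 ⟨hρi, hcross⟩⟩

end Lifting

theorem lifting_property_general (n : ℕ) (hn : 1 ≤ n)
    (τ η : ZMod (2 * n) → ZMod (2 * n))
    (hle : UncrossLE n τ η) (i : ZMod (2 * n))
    (hiA : inA n τ i) (hiB : inB n η i) :
    UncrossLE n τ (sMove n i η) ∧ UncrossLE n (sMove n i τ) η := by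
  have : Fact (1 < 2 * n) := ⟨by omega⟩
  exact (hle.lift hiA).1 hiB

/-- If `τ ≤ η` in the uncrossing order and `i ∈ A(τ) ∩ B(η)`, then
`τ ≤ s_i·η` and `s_i·τ ≤ η`. -/
theorem lifting_property (n : ℕ) (hn : 1 ≤ n)
    (τ η : ZMod (2 * n) → ZMod (2 * n))
    (hτ : IsMatching n τ) (hη : IsMatching n η)
    (hle : UncrossLE n τ η) (i : ZMod (2 * n))
    (hiA : inA n τ i) (hiB : inB n η i) :
    UncrossLE n τ (sMove n i η) ∧ UncrossLE n (sMove n i τ) η :=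
  lifting_property_general n hn τ η hle i hiA hiB
end Counting
end

section
/- If τ ∈ P_n is not the unique maximal element of the uncrossing partial order on P_n, then A(τ) is nonempty; that is, there exists i ∈ ℤ/2nℤ with τ(i) ≠ i+1 such that the pairs {i, τ(i)} and {i+1, τ(i+1)} do not cross. -/
open scoped Classical

section helpers
variable {N : ℕ} [NeZero N]

lemma val_eq_iff {a b : ZMod N} : a = b ↔ a.val = b.val :=
  ⟨fun h => h ▸ rfl, fun h => ZMod.val_injective N h⟩

lemma val_sub_of_le {a b : ZMod N} (h : b.val ≤ a.val) :
    (a - b).val = a.val - b.val := by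
  have e : a - b = ((a.val - b.val : ℕ) : ZMod N) := by
    rw [Nat.cast_sub h, ZMod.natCast_zmod_val, ZMod.natCast_zmod_val]
  rw [e, ZMod.val_cast_of_lt (lt_of_le_of_lt (Nat.sub_le _ _) (ZMod.val_lt a))]

lemma val_sub_comm {a b : ZMod N} (h : a ≠ b) :
    (b - a).val = N - (a - b).val := by
  have e : b - a = -(a - b) := by ring
  rw [e, ZMod.neg_val, if_neg (sub_ne_zero.mpr h)]

lemma val_add_small {a b : ZMod N} (h : a.val + b.val < N) :
    (a + b).val = a.val + b.val := by
  rw [ZMod.val_add, Nat.mod_eq_of_lt h]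

lemma val_sub_ne_zero {a b : ZMod N} (h : a ≠ b) : (a - b).val ≠ 0 := by
  simpa [ZMod.val_eq_zero, sub_eq_zero] using h

end helpers

/-- If `τ ∈ P_n` is not the unique maximal element (which is the
matching `i ↦ i + n`), then `A(τ)` is nonempty. -/
theorem inA_nonempty (n : ℕ) (hn : 1 ≤ n)
    (τ : ZMod (2 * n) → ZMod (2 * n)) (hτ : IsMatching n τ)
    (htop : τ ≠ fun i => i + (n : ZMod (2 * n))) :
    ∃ i, inA n τ i := by
  by_contra hA
  push_neg at hA
  haveI : NeZero (2 * n) := ⟨by omega⟩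
  obtain ⟨hinv, hfix⟩ := hτ
  rcases eq_or_lt_of_le hn with h1 | h2
  · -- n = 1
    subst h1
    apply htop; funext x
    have key : ∀ a b : ZMod (2*1), b ≠ a → b = a + ((1:ℕ) : ZMod (2*1)) := by decide
    exact key x (τ x) (hfix x)
  · -- n ≥ 2
    have hN4 : 4 ≤ 2 * n := by omega
    have hinj : Function.Injective τ := by
      intro a b h; rw [← hinv a, h, hinv]
    have hA' : ∀ i, τ i ≠ i + 1 → Crosses (2*n) i (τ i) (i+1) (τ (i+1)) := by
      intro i h; by_contra hc; exact hA i ⟨h, hc⟩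
    have hval1 : ((1:ℕ) : ZMod (2*n)).val = 1 := ZMod.val_cast_of_lt (by omega)
    have hval2 : ((2:ℕ) : ZMod (2*n)).val = 2 := ZMod.val_cast_of_lt (by omega)
    -- Step A : C is empty
    have hC : ∀ i, τ i ≠ i + 1 := by
      intro i hCi
      have hne2 : (i + 1 : ZMod (2*n)) ≠ i - 1 := by
        intro h
        have e : (i + 1) - (i - 1) = ((2:ℕ) : ZMod (2*n)) := by push_cast; ring
        rw [h, sub_self] at e
        rw [← e] at hval2
        simp at hval2
      have hprev : τ (i - 1) ≠ (i - 1) + 1 := by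
        intro h
        have e : (i - 1) + 1 = i := by ring
        rw [e] at h
        have : i - 1 = τ i := by rw [← hinv (i - 1), h]
        rw [hCi] at this
        exact hne2 this.symm
      have hcr := hA' (i - 1) hprev
      have e : (i - 1) + 1 = i := by ring
      rw [e, hCi] at hcr
      obtain ⟨hab, hcd, hca, hcb, hdb, hda, hiff⟩ := hcr
      set x := τ (i - 1) with hx
      -- hab : i - 1 ≠ x, hcb : i ≠ x, hda : i + 1 ≠ x
      have hu0 : (x - (i-1)).val ≠ 0 := val_sub_ne_zero (fun h => hab h.symm)
      have hu1 : (x - (i-1)).val ≠ 1 := by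
        intro h
        have : x - (i - 1) = ((1:ℕ) : ZMod (2*n)) := val_eq_iff.mpr (by rw [hval1, h])
        apply hcb
        have := sub_eq_iff_eq_add.mp this
        rw [this]; push_cast; ring
      have hu2 : (x - (i-1)).val ≠ 2 := by
        intro h
        have : x - (i - 1) = ((2:ℕ) : ZMod (2*n)) := val_eq_iff.mpr (by rw [hval2, h])
        apply hda
        have := sub_eq_iff_eq_add.mp this
        rw [this]; push_cast; ring
      have huL : (x - (i-1)).val < 2 * n := ZMod.val_lt _
      have hL : InArc (2*n) (i-1) x i := by
        have e1 : i - (i - 1) = ((1:ℕ) : ZMod (2*n)) := by push_cast; ring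
        refine ⟨?_, ?_⟩ <;> rw [e1, hval1] <;> omega
      obtain ⟨_, hRlt⟩ := hiff.mp hL
      have hw : ((i-1) - x).val = 2*n - (x - (i-1)).val :=
        val_sub_comm (fun h => hab h.symm)
      have e2 : (i + 1) - x = ((i - 1) - x) + ((2:ℕ) : ZMod (2*n)) := by push_cast; ring
      have hv : ((i+1) - x).val = ((i-1) - x).val + 2 := by
        rw [e2, val_add_small (by rw [hval2, hw]; omega), hval2]
      rw [hv, hw] at hRlt
      omega
    -- bounds on chord lengths
    have hfB : ∀ i, 2 ≤ (τ i - i).val ∧ (τ i - i).val ≤ 2*n - 2 := by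
      intro i
      have h0 : (τ i - i).val ≠ 0 := val_sub_ne_zero (hfix i)
      have h1 : (τ i - i).val ≠ 1 := by
        intro h
        have : τ i - i = ((1:ℕ) : ZMod (2*n)) := val_eq_iff.mpr (by rw [hval1, h])
        apply hC i
        have := sub_eq_iff_eq_add.mp this
        rw [this]; push_cast; ring
      have hlt : (τ i - i).val < 2*n := ZMod.val_lt _
      have htop' : (τ i - i).val ≠ 2*n - 1 := by
        intro h
        have e : τ i - i = ((2*n - 1 : ℕ) : ZMod (2*n)) :=
          val_eq_iff.mpr (by rw [ZMod.val_cast_of_lt (by omega), h])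
        have e2 : ((2*n - 1 : ℕ) : ZMod (2*n)) = -1 := by
          rw [Nat.cast_sub (by omega : 1 ≤ 2*n), ZMod.natCast_self]
          simp
        have : τ i = i - 1 := by
          have := sub_eq_iff_eq_add.mp (e.trans e2); rw [this]; ring
        apply hC (i - 1)
        rw [← this, hinv i, this]; ring
      omega
    -- Step C : weakly increasing
    have hmono : ∀ i, (τ i - i).val ≤ (τ (i+1) - (i+1)).val := by
      intro i
      obtain ⟨hab, hcd, hca, hcb, hdb, hda, hiff⟩ := hA' i (hC i)
      -- hab : i ≠ τ i, hcb : i+1 ≠ τ i, hdb : τ(i+1) ≠ i, hda : τ(i+1) ≠ τ i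
      obtain ⟨hF2, hFle⟩ := hfB i
      obtain ⟨hG2, hGle⟩ := hfB (i+1)
      have hL : InArc (2*n) i (τ i) (i+1) := by
        have e1 : (i + 1) - i = ((1:ℕ) : ZMod (2*n)) := by push_cast; ring
        refine ⟨?_, ?_⟩ <;> rw [e1, hval1] <;> omega
      obtain ⟨_, hRlt⟩ := hiff.mp hL
      have hio : (i - τ i).val = 2*n - (τ i - i).val := val_sub_comm (fun h => hab h.symm)
      by_contra hlt
      push_neg at hlt
      -- b = τ(i+1) - i, a = τ i - i
      have hbv : (τ (i+1) - i).val = (τ (i+1) - (i+1)).val + 1 := by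
        have e : τ (i+1) - i = (τ (i+1) - (i+1)) + ((1:ℕ) : ZMod (2*n)) := by push_cast; ring
        rw [e, val_add_small (by rw [hval1]; omega), hval1]
      have hbna : τ (i+1) - i ≠ τ i - i := by
        intro h; exact hda (by have := sub_left_injective h; exact this)
      have hblt : (τ (i+1) - i).val < (τ i - i).val := by
        rcases lt_or_eq_of_le (by omega : (τ (i+1) - i).val ≤ (τ i - i).val) with h | h
        · exact h
        · exact absurd (val_eq_iff.mpr h) hbna
      have hsub : ((τ i - i) - (τ (i+1) - i)).val = (τ i - i).val - (τ (i+1) - i).val :=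
        val_sub_of_le (le_of_lt hblt)
      have hba : (τ (i+1) - τ i).val
          = 2*n - ((τ i - i).val - (τ (i+1) - i).val) := by
        have e : τ (i+1) - τ i = (τ (i+1) - i) - (τ i - i) := by ring
        rw [e, val_sub_comm hbna.symm, hsub]
      rw [hba, hio] at hRlt
      omega
    -- Step B : constant
    have hstep : ∀ (k : ℕ) (i : ZMod (2*n)),
        (τ i - i).val ≤ (τ (i + (k : ZMod (2*n))) - (i + (k : ZMod (2*n)))).val := by
      intro k
      induction k with
      | zero => intro i; simp
      | succ k ih =>
        intro i
        have e : i + ((k+1 : ℕ) : ZMod (2*n)) = (i + (k : ZMod (2*n))) + 1 := by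
          push_cast; ring
        rw [e]
        exact le_trans (ih i) (hmono (i + (k : ZMod (2*n))))
    have hconst : ∀ i j : ZMod (2*n), (τ i - i).val = (τ j - j).val := by
      have hle : ∀ i j : ZMod (2*n), (τ i - i).val ≤ (τ j - j).val := by
        intro i j
        have := hstep (j - i).val i
        rwa [show i + (((j - i).val : ℕ) : ZMod (2*n)) = j by
          rw [ZMod.natCast_zmod_val]; ring] at this
      exact fun i j => le_antisymm (hle i j) (hle j i)
    -- conclude τ i = i + n
    have hcn : (τ 0 - 0).val = n := by
      have h1 : (τ (τ 0) - τ 0).val = 2*n - (τ 0 - 0).val := by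
        rw [hinv 0]
        have : (0 : ZMod (2*n)) - τ 0 = (0:ZMod (2*n)) - τ 0 := rfl
        have := val_sub_comm (a := τ 0 - 0) (b := (0:ZMod (2*n)) - 0)
          (by simpa [sub_eq_zero] using hfix 0)
        simpa using this
      have h2 := hconst 0 (τ 0)
      have h3 := (hfB 0).1
      have h4 := (hfB 0).2
      omega
    apply htop
    funext i
    have hv : (τ i - i).val = n := (hconst i 0).trans hcn
    have : τ i - i = ((n : ℕ) : ZMod (2*n)) :=
      val_eq_iff.mpr (by rw [ZMod.val_cast_of_lt (by omega), hv])
    have := sub_eq_iff_eq_add.mp this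
    rw [this]; ring
end
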